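/- Let {X_{k,n} : k,n ≥ 1} be a double array of independent standard Gaussian random variables (mean 0, variance 1). Then max_{1 ≤ k ≤ m, 1 ≤ n ≤ j} X_{k,n} − √(2 ln(mj)) → 0 almost surely as m ∨ j → ∞. -/

import Mathlib

/-!
Upper bound: by the Chernoff bound `P(X > c) ≤ exp(-c²/2)` and a union bound, the maximum over
the dyadic block `[1, 2^(a+1)] × [1, 2^(b+1)]` exceeds `√(2 log 2^(a+b)) + ε` with probability at
most `4 exp(-ε √(2 log 2) √(a+b))`, which is summable over `(a, b)`. By Borel–Cantelli only finitely
many blocks are exceptional, and every `(m, j)` lies in the block of `(⌊log₂ m⌋, ⌊log₂ j⌋)`.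

Lower bound: `P(X > c) ≥ exp(-(c²+3)/2) / (√(2π) c)` (integrate the density over `(c, c + 1/c]`),
so by independence `P(runMax X m j ≤ √(2 log N) - ε) ≤ (1 - P(X > c))^N ≤ exp(-N P(X > c))`
with `N = mj`, and `N P(X > c)` is at least of order `exp(ε √(2 log N)) / √(log N)`, eventually
beyond `2 log N`. The resulting bound `(mj)⁻²` is summable over `(m, j)`; Borel–Cantelli again.

"Eventually as `m ∨ j → ∞`" is expressed through the cofinite filter on `ℕ × ℕ`.
-/

open MeasureTheory Real Filter Set

/-- An Orlicz N-function: continuous, even, convex, vanishing at `0`, monotone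
increasing on `[0, ∞)`, with `φ x / x → 0` as `x → 0⁺` and `φ x / x → ∞` as `x → ∞`. -/
structure IsOrliczN (φ : ℝ → ℝ) : Prop where
  continuous : Continuous φ
  even : ∀ x, φ (-x) = φ x
  convexOn : ConvexOn ℝ Set.univ φ
  map_zero : φ 0 = 0
  strictMonoOn : StrictMonoOn φ (Set.Ici 0)
  tendsto_zero : Tendsto (fun x => φ x / x) (nhdsWithin 0 (Set.Ioi 0)) (nhds 0)
  tendsto_atTop : Tendsto (fun x => φ x / x) atTop atTop

/-- `ψ` is the Young–Fenchel transform of `φ`: `ψ x = sup_{y ∈ ℝ} (x * y - φ y)`. -/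
def IsYoungFenchel (φ ψ : ℝ → ℝ) : Prop :=
  ∀ x, IsLUB {z | ∃ y, z = x * y - φ y} (ψ x)

/-- The moment generating function bound `E exp(t X) ≤ exp (φ (a t))` with constant `a > 0`. -/
def PhiMGF (φ : ℝ → ℝ) {Ω : Type*} [MeasurableSpace Ω] (P : Measure Ω) (X : Ω → ℝ)
    (a : ℝ) : Prop :=
  0 < a ∧ ∀ t : ℝ, Integrable (fun ω => Real.exp (t * X ω)) P ∧
    ∫ ω, Real.exp (t * X ω) ∂P ≤ Real.exp (φ (a * t))

/-- `X` is a `φ`-subgaussian random variable: centered, with an MGF bound. -/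
def IsPhiSubGaussian (φ : ℝ → ℝ) {Ω : Type*} [MeasurableSpace Ω] (P : Measure Ω)
    (X : Ω → ℝ) : Prop :=
  Integrable X P ∧ (∫ ω, X ω ∂P) = 0 ∧ ∃ a, PhiMGF φ P X a

/-- The `φ`-subgaussian norm `τ_φ(X)`. -/
noncomputable def tauPhi (φ : ℝ → ℝ) {Ω : Type*} [MeasurableSpace Ω] (P : Measure Ω)
    (X : Ω → ℝ) : ℝ :=
  sInf {a | PhiMGF φ P X a}

/-- `max_{1 ≤ k ≤ m, 1 ≤ n ≤ j} X_{k,n}(ω)`. -/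
noncomputable def runMax {Ω : Type*} (X : ℕ → ℕ → Ω → ℝ) (m j : ℕ) (ω : Ω) : ℝ :=
  sSup {y | ∃ k n, 1 ≤ k ∧ k ≤ m ∧ 1 ≤ n ∧ n ≤ j ∧ y = X k n ω}

/-- Convergence of a double array `b m j` to `l` as `m ∨ j → ∞`. -/
def TendstoMaxIdx (b : ℕ → ℕ → ℝ) (l : ℝ) : Prop :=
  ∀ ε > 0, ∃ N : ℕ, ∀ m j : ℕ, 1 ≤ m → 1 ≤ j → N ≤ max m j → |b m j - l| < ε

open ProbabilityTheory

lemma tendsto_max_cofinite_atTop :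
    Tendsto (fun p : ℕ × ℕ => max p.1 p.2) cofinite atTop := by
  refine tendsto_atTop.2 fun N => eventually_cofinite.2 <|
    ((finite_Iio N).prod (finite_Iio N)).subset fun p hp => ?_
  simpa only [mem_ofPred_eq, not_le, max_lt_iff, mem_prod, mem_Iio] using hp

lemma exists_forall_le_max_of_eventually_cofinite {Q : ℕ × ℕ → Prop}
    (h : ∀ᶠ p in cofinite, Q p) : ∃ N, ∀ m j, N ≤ max m j → Q (m, j) := by
  obtain ⟨M, hM⟩ := ((eventually_cofinite.1 h).image fun p => max p.1 p.2).bddAbove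
  refine ⟨M + 1, fun m j hmj => by_contra fun hQ => ?_⟩
  have : max m j ≤ M := hM ⟨(m, j), hQ, rfl⟩
  omega

lemma ae_eventually_notMem_of_summable {α ι : Type*} [MeasurableSpace α] [Countable ι]
    {μ : Measure α} [IsFiniteMeasure μ] {s : ι → Set α}
    (hs : Summable fun i => μ.real (s i)) : ∀ᵐ x ∂μ, ∀ᶠ i in cofinite, x ∉ s i := by
  have hfin : ∑' i, μ (s i) ≠ ⊤ := by
    have h (i : ι) : μ (s i) = ENNReal.ofReal (μ.real (s i)) :=
      (ofReal_measureReal (measure_ne_top μ _)).symm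
    simp_rw [h, ← ENNReal.ofReal_tsum_of_nonneg (fun _ => measureReal_nonneg) hs]
    exact ENNReal.ofReal_ne_top
  filter_upwards [ae_finite_setOfPred_mem hfin] with x hx
  exact eventually_cofinite.2 (by simpa using hx)

section RunMax

variable {Ω : Type*} (X : ℕ → ℕ → Ω → ℝ) {m j : ℕ}

lemma le_runMax {k n : ℕ} (ω : Ω) (hk : 1 ≤ k) (hkm : k ≤ m) (hn : 1 ≤ n) (hnj : n ≤ j) :
    X k n ω ≤ runMax X m j ω := by
  refine le_csSup ?_ ⟨k, n, hk, hkm, hn, hnj, rfl⟩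
  refine (((finite_Icc 1 m).prod (finite_Icc 1 j)).image fun p => X p.1 p.2 ω).bddAbove.mono ?_
  rintro _ ⟨k, n, hk, hkm, hn, hnj, rfl⟩
  exact ⟨(k, n), ⟨⟨hk, hkm⟩, hn, hnj⟩, rfl⟩

lemma runMax_le_iff (ω : Ω) (hm : 1 ≤ m) (hj : 1 ≤ j) {c : ℝ} :
    runMax X m j ω ≤ c ↔ ∀ p ∈ Finset.Icc 1 m ×ˢ Finset.Icc 1 j, X p.1 p.2 ω ≤ c := by
  simp only [Finset.mem_product, Finset.mem_Icc, and_imp, Prod.forall]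
  refine ⟨fun h k n hk hkm hn hnj => (le_runMax X ω hk hkm hn hnj).trans h, fun h => ?_⟩
  refine csSup_le ⟨X 1 1 ω, 1, 1, le_rfl, hm, le_rfl, hj, rfl⟩ ?_
  rintro _ ⟨k, n, hk, hkm, hn, hnj, rfl⟩
  exact h k n hk hkm hn hnj

lemma runMax_mono (ω : Ω) {m' j' : ℕ} (hm : 1 ≤ m) (hj : 1 ≤ j) (hmm' : m ≤ m') (hjj' : j ≤ j') :
    runMax X m j ω ≤ runMax X m' j' ω := by
  refine (runMax_le_iff X ω hm hj).2 fun p hp => ?_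
  simp only [Finset.mem_product, Finset.mem_Icc] at hp
  exact le_runMax X ω hp.1.1 (hp.1.2.trans hmm') hp.2.1 (hp.2.2.trans hjj')

variable [MeasurableSpace Ω] {P : Measure Ω} {ν : Measure ℝ}

lemma measureReal_lt_runMax_le [IsFiniteMeasure P] (hmeas : ∀ k n, Measurable (X k n))
    (hdist : ∀ k n, 1 ≤ k → 1 ≤ n → P.map (X k n) = ν) (hm : 1 ≤ m) (hj : 1 ≤ j) (c : ℝ) :
    P.real {ω | c < runMax X m j ω} ≤ m * j * ν.real (Ioi c) := by
  set S := Finset.Icc 1 m ×ˢ Finset.Icc 1 j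
  have hsub : {ω | c < runMax X m j ω} ⊆ ⋃ p ∈ S, X p.1 p.2 ⁻¹' Ioi c := by
    intro ω hω
    have := mt (runMax_le_iff X ω hm hj).2 (not_le.2 hω)
    push Not at this
    simpa [S] using this
  calc P.real {ω | c < runMax X m j ω} ≤ ∑ p ∈ S, P.real (X p.1 p.2 ⁻¹' Ioi c) :=
        (measureReal_mono hsub (measure_ne_top _ _)).trans (measureReal_biUnion_finset_le _ _)
    _ = ∑ _p ∈ S, ν.real (Ioi c) := by
        refine Finset.sum_congr rfl fun p hp => ?_
        simp only [S, Finset.mem_product, Finset.mem_Icc] at hp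
        rw [← hdist p.1 p.2 hp.1.1 hp.2.1, map_measureReal_apply (hmeas _ _) measurableSet_Ioi]
    _ = m * j * ν.real (Ioi c) := by simp [S, Finset.sum_const, mul_assoc]

lemma measureReal_runMax_le_eq (hmeas : ∀ k n, Measurable (X k n))
    (hdist : ∀ k n, 1 ≤ k → 1 ≤ n → P.map (X k n) = ν)
    (hindep : iIndepFun (fun p : ℕ × ℕ => X p.1 p.2) P) (hm : 1 ≤ m) (hj : 1 ≤ j) (c : ℝ) :
    P.real {ω | runMax X m j ω ≤ c} = ν.real (Iic c) ^ (m * j) := by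
  set S := Finset.Icc 1 m ×ˢ Finset.Icc 1 j
  have hset : {ω | runMax X m j ω ≤ c} = ⋂ p ∈ S, X p.1 p.2 ⁻¹' Iic c := by
    ext ω
    simpa [S] using runMax_le_iff X ω hm hj
  rw [hset, measureReal_def, hindep.meas_biInter fun p _ => ⟨Iic c, measurableSet_Iic, rfl⟩,
    ENNReal.toReal_prod]
  calc ∏ p ∈ S, (P (X p.1 p.2 ⁻¹' Iic c)).toReal = ∏ _p ∈ S, ν.real (Iic c) := by
        refine Finset.prod_congr rfl fun p hp => ?_
        simp only [S, Finset.mem_product, Finset.mem_Icc] at hp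
        rw [← measureReal_def, ← hdist p.1 p.2 hp.1.1 hp.2.1,
          map_measureReal_apply (hmeas _ _) measurableSet_Iic]
    _ = ν.real (Iic c) ^ (m * j) := by simp [S]

end RunMax

lemma gaussianReal_real_Ioi_le {c : ℝ} (hc : 0 ≤ c) :
    (gaussianReal 0 1).real (Ioi c) ≤ exp (-c ^ 2 / 2) := by
  have h := measure_ge_le_exp_mul_mgf (X := id) (μ := gaussianReal 0 1) c hc
    (integrable_exp_mul_gaussianReal c)
  rw [mgf_id_gaussianReal, ← exp_add] at h
  have hsub : Ioi c ⊆ {x | c ≤ id x} := fun x (hx : c < x) => hx.le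
  refine (measureReal_mono hsub (measure_ne_top _ _)).trans (h.trans_eq ?_)
  congr 1
  push_cast
  ring

lemma exp_div_le_gaussianReal_real_Ioi {c : ℝ} (hc : 1 ≤ c) :
    exp (-(c ^ 2 + 3) / 2) / (√(2 * π) * c) ≤ (gaussianReal 0 1).real (Ioi c) := by
  have hc0 : 0 < c := one_pos.trans_le hc
  have hI : Ioc c (c + c⁻¹) ⊆ Ioi c := Ioc_subset_Ioi_self
  have hpdf : ∀ x ∈ Ioc c (c + c⁻¹),
      (√(2 * π))⁻¹ * exp (-(c ^ 2 + 3) / 2) ≤ gaussianPDFReal 0 1 x := by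
    rintro x ⟨hcx, hxc⟩
    have hcinv : c⁻¹ ≤ 1 := inv_le_one_of_one_le₀ hc
    have hx2 : x ^ 2 ≤ c ^ 2 + 3 := by
      have : c * c⁻¹ = 1 := mul_inv_cancel₀ hc0.ne'
      nlinarith [inv_pos.2 hc0]
    simp only [gaussianPDFReal, NNReal.coe_one, mul_one, sub_zero]
    gcongr
  have hint : IntegrableOn (gaussianPDFReal 0 1) (Ioc c (c + c⁻¹)) :=
    (integrable_gaussianPDFReal 0 1).integrableOn
  have hvol : volume.real (Ioc c (c + c⁻¹)) = c⁻¹ := by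
    rw [Real.volume_real_Ioc_of_le (by simp [hc0.le])]
    ring
  calc exp (-(c ^ 2 + 3) / 2) / (√(2 * π) * c)
      = volume.real (Ioc c (c + c⁻¹)) • ((√(2 * π))⁻¹ * exp (-(c ^ 2 + 3) / 2)) := by
        rw [hvol, smul_eq_mul]
        field_simp
    _ ≤ ∫ x in Ioc c (c + c⁻¹), gaussianPDFReal 0 1 x :=
        setIntegral_ge_of_const_le measurableSet_Ioc measure_Ioc_lt_top.ne hpdf hint
    _ ≤ ∫ x in Ioi c, gaussianPDFReal 0 1 x :=
        setIntegral_mono_set (integrable_gaussianPDFReal 0 1).integrableOn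
          (ae_of_all _ (gaussianPDFReal_nonneg 0 1)) hI.eventuallyLE
    _ = (gaussianReal 0 1).real (Ioi c) := by
        rw [measureReal_def, gaussianReal_apply_eq_integral 0 one_ne_zero,
          ENNReal.toReal_ofReal (setIntegral_nonneg measurableSet_Ioi
            fun x _ => gaussianPDFReal_nonneg 0 1 x)]

lemma summable_exp_neg_mul_sqrt {c : ℝ} (hc : 0 < c) : Summable fun n : ℕ => exp (-c * √n) := by
  refine (Real.summable_nat_pow_inv.2 one_lt_two).of_norm_bounded_eventually ?_
  have hsqrt : Tendsto (fun n : ℕ => √(n : ℝ)) atTop atTop :=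
    tendsto_sqrt_atTop.comp tendsto_natCast_atTop_atTop
  rw [Nat.cofinite_eq_atTop]
  filter_upwards [hsqrt.eventually ((isLittleO_pow_exp_pos_mul_atTop 4 hc).bound one_pos),
    eventually_ge_atTop 1] with n hn hn1
  have hn4 : (√(n : ℝ)) ^ 4 = (n : ℝ) ^ 2 := by
    rw [show 4 = 2 * 2 from rfl, pow_mul, sq_sqrt (Nat.cast_nonneg n)]
  rw [norm_of_nonneg (exp_nonneg _), neg_mul, exp_neg]
  rw [norm_of_nonneg (by positivity), norm_of_nonneg (exp_nonneg _), one_mul, hn4] at hn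
  exact inv_anti₀ (by positivity) hn

lemma summable_exp_neg_mul_sqrt_add {c : ℝ} (hc : 0 < c) :
    Summable fun p : ℕ × ℕ => exp (-c * √((p.1 + p.2 : ℕ) : ℝ)) := by
  have h := summable_exp_neg_mul_sqrt (half_pos hc)
  refine (h.mul_of_nonneg h (fun _ => exp_nonneg _) (fun _ => exp_nonneg _)).of_nonneg_of_le
    (fun _ => exp_nonneg _) fun p => ?_
  rw [← exp_add, exp_le_exp, Nat.cast_add]
  have h1 : √(p.1 : ℝ) ≤ √((p.1 : ℝ) + p.2) := sqrt_le_sqrt (by simp)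
  have h2 : √(p.2 : ℝ) ≤ √((p.1 : ℝ) + p.2) := sqrt_le_sqrt (by simp)
  nlinarith

lemma two_pow_mul_exp_neg_sq_le (a b : ℕ) {ε : ℝ} (hε : 0 ≤ ε) :
    (2 ^ (a + 1) * 2 ^ (b + 1) : ℝ) * exp (-(√(2 * log ((2 ^ (a + b) : ℕ) : ℝ)) + ε) ^ 2 / 2)
      ≤ 4 * exp (-(ε * √(2 * log 2)) * √((a + b : ℕ) : ℝ)) := by
  set n := a + b
  have hlog : log ((2 ^ n : ℕ) : ℝ) = n * log 2 := by push_cast; rw [Real.log_pow]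
  have hs : √(2 * log ((2 ^ n : ℕ) : ℝ)) = √(2 * log 2) * √(n : ℝ) := by
    rw [hlog, ← sqrt_mul (by positivity)]
    ring_nf
  have hs2 : √(2 * log ((2 ^ n : ℕ) : ℝ)) ^ 2 = 2 * (n * log 2) := by
    rw [sq_sqrt (by rw [hlog]; positivity), hlog]
  have hpow : (2 : ℝ) ^ n * exp (-(n * log 2)) = 1 := by
    rw [exp_neg, ← Real.rpow_natCast, Real.rpow_def_of_pos two_pos, mul_comm (log 2)]
    exact mul_inv_cancel₀ (exp_pos _).ne'
  calc (2 ^ (a + 1) * 2 ^ (b + 1) : ℝ) * exp (-(√(2 * log ((2 ^ n : ℕ) : ℝ)) + ε) ^ 2 / 2)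
      ≤ 4 * (2 ^ n * exp (-(n * log 2)) * exp (-ε * √(2 * log ((2 ^ n : ℕ) : ℝ)))) := by
        rw [mul_assoc (2 ^ n : ℝ), ← exp_add,
          show (2 : ℝ) ^ (a + 1) * 2 ^ (b + 1) = 4 * 2 ^ n by ring, mul_assoc]
        gcongr
        nlinarith [sqrt_nonneg (2 * log ((2 ^ n : ℕ) : ℝ))]
    _ = 4 * exp (-(ε * √(2 * log 2)) * √(n : ℝ)) := by
        rw [hpow, hs]
        ring_nf

-- With `t = √(2 log N)`, the right-hand side is `N` times the lower tail bound at `t - ε`.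
lemma eventually_sq_le_exp_sq_half_mul {ε : ℝ} (hε : 0 < ε) :
    ∀ᶠ t in atTop, 1 ≤ t - ε ∧
      t ^ 2 ≤ exp (t ^ 2 / 2) * (exp (-((t - ε) ^ 2 + 3) / 2) / (√(2 * π) * (t - ε))) := by
  set C := exp (-(ε ^ 2 + 3) / 2) / √(2 * π)
  have hC : 0 < C := by positivity
  filter_upwards [eventually_ge_atTop (1 + ε),
    (isLittleO_pow_exp_pos_mul_atTop 3 hε).bound hC] with t ht hbound
  have ht0 : 0 < t := by linarith
  rw [norm_of_nonneg (by positivity), norm_of_nonneg (exp_nonneg _)] at hbound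
  have hexp : exp (t ^ 2 / 2) * exp (-((t - ε) ^ 2 + 3) / 2)
      = exp (ε * t) * exp (-(ε ^ 2 + 3) / 2) := by
    rw [← exp_add, ← exp_add]
    ring_nf
  refine ⟨by linarith, ?_⟩
  rw [← mul_div_assoc, hexp, le_div_iff₀ (by have := sqrt_pos.2 two_pi_pos; nlinarith)]
  calc t ^ 2 * (√(2 * π) * (t - ε)) ≤ t ^ 3 * √(2 * π) := by
        have := sqrt_nonneg (2 * π)
        nlinarith [mul_nonneg (mul_nonneg this (sq_nonneg t)) hε.le]
    _ ≤ C * exp (ε * t) * √(2 * π) := by gcongr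
    _ = exp (ε * t) * exp (-(ε ^ 2 + 3) / 2) := by
        simp only [C]
        field_simp

lemma eventually_gaussianReal_real_Iic_pow_le {ε : ℝ} (hε : 0 < ε) :
    ∀ᶠ N : ℕ in atTop,
      (gaussianReal 0 1).real (Iic (√(2 * log N) - ε)) ^ N ≤ ((N : ℝ) ^ 2)⁻¹ := by
  have ht : Tendsto (fun N : ℕ => √(2 * log N)) atTop atTop :=
    tendsto_sqrt_atTop.comp ((tendsto_log_atTop.comp tendsto_natCast_atTop_atTop).const_mul_atTop
      two_pos)
  filter_upwards [ht.eventually (eventually_sq_le_exp_sq_half_mul hε),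
    eventually_ge_atTop 1] with N ⟨hc, hN⟩ hN1
  set t := √(2 * log N)
  set q := exp (-((t - ε) ^ 2 + 3) / 2) / (√(2 * π) * (t - ε))
  have hN0 : (0 : ℝ) < N := by exact_mod_cast hN1
  have ht2 : t ^ 2 = 2 * log N :=
    sq_sqrt (mul_nonneg zero_le_two (log_nonneg (by exact_mod_cast hN1)))
  have hexp : exp (t ^ 2 / 2) = N := by rw [ht2, mul_div_cancel_left₀ _ two_ne_zero, exp_log hN0]
  have hIic : (gaussianReal 0 1).real (Iic (t - ε)) ≤ exp (-q) := by
    rw [← compl_Ioi, probReal_compl_eq_one_sub measurableSet_Ioi]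
    linarith [exp_div_le_gaussianReal_real_Ioi hc, one_sub_le_exp_neg q]
  calc (gaussianReal 0 1).real (Iic (t - ε)) ^ N ≤ exp (-q) ^ N := by gcongr
    _ = exp (-(N * q)) := by rw [← exp_nat_mul, mul_neg]
    _ ≤ exp (-(2 * log N)) := by
        rw [exp_le_exp, neg_le_neg_iff, ← ht2, ← hexp]
        exact hN
    _ = ((N : ℝ) ^ 2)⁻¹ := by
        rw [exp_neg, two_mul, exp_add, exp_log hN0, sq]

lemma tendsto_prodMap_log_cofinite :
    Tendsto (Prod.map (Nat.log 2) (Nat.log 2)) (cofinite : Filter (ℕ × ℕ)) cofinite := by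
  have h : Tendsto (Nat.log 2) cofinite cofinite := by
    rw [Nat.cofinite_eq_atTop]
    exact tendsto_atTop_atTop.2 fun b => ⟨2 ^ b, fun n hn => Nat.le_log_of_pow_le one_lt_two hn⟩
  simpa only [coprod_cofinite] using h.prodMap_coprod h

section GaussianArray

variable {Ω : Type*} [MeasurableSpace Ω] {P : Measure Ω} [IsProbabilityMeasure P]
  {X : ℕ → ℕ → Ω → ℝ}

lemma ae_eventually_runMax_le (hmeas : ∀ k n, Measurable (X k n))
    (hgauss : ∀ k n, 1 ≤ k → 1 ≤ n → P.map (X k n) = gaussianReal 0 1) {ε : ℝ} (hε : 0 < ε) :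
    ∀ᵐ ω ∂P, ∀ᶠ p : ℕ × ℕ in cofinite, 1 ≤ p.1 → 1 ≤ p.2 →
      runMax X p.1 p.2 ω ≤ √(2 * log ((p.1 * p.2 : ℕ) : ℝ)) + ε := by
  set B : ℕ × ℕ → Set Ω := fun p =>
    {ω | √(2 * log ((2 ^ (p.1 + p.2) : ℕ) : ℝ)) + ε < runMax X (2 ^ (p.1 + 1)) (2 ^ (p.2 + 1)) ω}
  have hB (p : ℕ × ℕ) : P.real (B p) ≤ 4 * exp (-(ε * √(2 * log 2)) * √((p.1 + p.2 : ℕ) : ℝ)) := by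
    refine (measureReal_lt_runMax_le X hmeas hgauss Nat.one_le_two_pow Nat.one_le_two_pow
      _).trans ?_
    refine le_trans ?_ (two_pow_mul_exp_neg_sq_le p.1 p.2 hε.le)
    push_cast
    gcongr
    exact gaussianReal_real_Ioi_le (by positivity)
  have hsum : Summable fun p => P.real (B p) :=
    ((summable_exp_neg_mul_sqrt_add (by positivity)).mul_left 4).of_nonneg_of_le
      (fun _ => measureReal_nonneg) hB
  filter_upwards [ae_eventually_notMem_of_summable hsum] with ω hω
  filter_upwards [tendsto_prodMap_log_cofinite.eventually hω] with ⟨m, j⟩ hmj hm hj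
  calc runMax X m j ω ≤ runMax X (2 ^ (Nat.log 2 m + 1)) (2 ^ (Nat.log 2 j + 1)) ω :=
        runMax_mono X ω hm hj (Nat.lt_pow_succ_log_self one_lt_two m).le
          (Nat.lt_pow_succ_log_self one_lt_two j).le
    _ ≤ √(2 * log ((2 ^ (Nat.log 2 m + Nat.log 2 j) : ℕ) : ℝ)) + ε := not_lt.1 hmj
    _ ≤ √(2 * log ((m * j : ℕ) : ℝ)) + ε := by
        have hpow : 2 ^ (Nat.log 2 m + Nat.log 2 j) ≤ m * j := by
          rw [pow_add]
          exact Nat.mul_le_mul (Nat.pow_log_le_self 2 (by omega)) (Nat.pow_log_le_self 2 (by omega))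
        gcongr

lemma ae_eventually_lt_runMax (hmeas : ∀ k n, Measurable (X k n))
    (hgauss : ∀ k n, 1 ≤ k → 1 ≤ n → P.map (X k n) = gaussianReal 0 1)
    (hindep : iIndepFun (fun p : ℕ × ℕ => X p.1 p.2) P) {ε : ℝ} (hε : 0 < ε) :
    ∀ᵐ ω ∂P, ∀ᶠ p : ℕ × ℕ in cofinite, 1 ≤ p.1 → 1 ≤ p.2 →
      √(2 * log ((p.1 * p.2 : ℕ) : ℝ)) - ε < runMax X p.1 p.2 ω := by
  set E : ℕ × ℕ → Set Ω := fun p =>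
    {ω | 1 ≤ p.1 ∧ 1 ≤ p.2 ∧ runMax X p.1 p.2 ω ≤ √(2 * log ((p.1 * p.2 : ℕ) : ℝ)) - ε}
  obtain ⟨N₀, hN₀⟩ := eventually_atTop.1 (eventually_gaussianReal_real_Iic_pow_le hε)
  have hE : ∀ᶠ p : ℕ × ℕ in cofinite, ‖P.real (E p)‖ ≤ ((p.1 : ℝ) ^ 2)⁻¹ * ((p.2 : ℝ) ^ 2)⁻¹ := by
    filter_upwards [tendsto_max_cofinite_atTop.eventually_ge_atTop N₀] with ⟨m, j⟩ hmax
    rw [norm_of_nonneg measureReal_nonneg]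
    by_cases hmj : 1 ≤ m ∧ 1 ≤ j
    · have hN : N₀ ≤ m * j := hmax.trans (max_le (Nat.le_mul_of_pos_right m hmj.2)
        (Nat.le_mul_of_pos_left j hmj.1))
      calc P.real (E (m, j)) ≤ P.real {ω | runMax X m j ω ≤ √(2 * log ((m * j : ℕ) : ℝ)) - ε} :=
            measureReal_mono (fun ω hω => hω.2.2) (measure_ne_top _ _)
        _ ≤ (((m * j : ℕ) : ℝ) ^ 2)⁻¹ := by
            rw [measureReal_runMax_le_eq X hmeas hgauss hindep hmj.1 hmj.2]
            exact hN₀ _ hN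
        _ = ((m : ℝ) ^ 2)⁻¹ * ((j : ℝ) ^ 2)⁻¹ := by push_cast; rw [mul_pow, mul_inv]
    · have : E (m, j) = ∅ := eq_empty_of_forall_notMem fun ω hω => hmj ⟨hω.1, hω.2.1⟩
      rw [this, measureReal_empty]
      positivity
  have h := Real.summable_nat_pow_inv.2 one_lt_two
  filter_upwards [ae_eventually_notMem_of_summable ((h.mul_of_nonneg h (fun _ => by positivity)
    (fun _ => by positivity)).of_norm_bounded_eventually hE)] with ω hω
  filter_upwards [hω] with p hp hm hj
  exact not_le.1 fun hle => hp ⟨hm, hj, hle⟩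

end GaussianArray

/-- for a double array of independent standard Gaussian random variables,
`max_{1≤k≤m,1≤n≤j} X_{k,n} - √(2 ln(mj)) → 0` a.s. as `m ∨ j → ∞`. -/
theorem runMax_gaussian_tendsto_zero
    {Ω : Type*} [MeasurableSpace Ω] (P : Measure Ω) [IsProbabilityMeasure P]
    (X : ℕ → ℕ → Ω → ℝ)
    (hmeas : ∀ k n : ℕ, Measurable (X k n))
    (hgauss : ∀ k n : ℕ, 1 ≤ k → 1 ≤ n →
      Measure.map (X k n) P = ProbabilityTheory.gaussianReal 0 1)
    (hindep : ProbabilityTheory.iIndepFun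
      (fun p : ℕ × ℕ => X p.1 p.2) P) :
    ∀ᵐ ω ∂P, TendstoMaxIdx
      (fun m j => runMax X m j ω - Real.sqrt (2 * Real.log ((m * j : ℕ) : ℝ))) 0 := by
  have hbound (q : ℕ) : ∀ᵐ ω ∂P, ∀ᶠ p : ℕ × ℕ in cofinite, 1 ≤ p.1 → 1 ≤ p.2 →
      |runMax X p.1 p.2 ω - √(2 * log ((p.1 * p.2 : ℕ) : ℝ))| ≤ 1 / (q + 1) := by
    have hq : (0 : ℝ) < 1 / (q + 1) := Nat.one_div_pos_of_nat
    filter_upwards [ae_eventually_runMax_le hmeas hgauss hq,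
      ae_eventually_lt_runMax hmeas hgauss hindep hq] with ω hup hlow
    filter_upwards [hup, hlow] with p hup hlow hm hj
    rw [abs_le]
    constructor <;> linarith [hup hm hj, hlow hm hj]
  filter_upwards [ae_all_iff.2 hbound] with ω hω ε hε
  obtain ⟨q, hq⟩ := exists_nat_one_div_lt hε
  obtain ⟨N, hN⟩ := exists_forall_le_max_of_eventually_cofinite (hω q)
  exact ⟨N, fun m j hm hj hmj => by simpa using (hN m j hmj hm hj).trans_lt hq⟩
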